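/- arXiv:math/0307179 — 2 statements merged into one kernel-verified Lean document; each statement's English description precedes it below -/
import Mathlib

section
/- Lemma on order-independence of division: let <_1 and <_2 be two monomial orders on ℕ^N allowing division, and let {Q_1,…,Q_r} be the reduced minimal standard basis of an ideal J with respect to <_1. If exp_{<_1}(Q_j) = exp_{<_2}(Q_j) for all j, then {Q_1,…,Q_r} is also the reduced minimal standard basis of J with respect to <_2. -/
open MvPolynomial

/-- `e + ℕ^N` inside the exponent monoid. -/
def upSet {N : ℕ} (e : Fin N →₀ ℕ) : Set (Fin N →₀ ℕ) := {x | ∃ a, x = e + a}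

/-- `e` is the privileged exponent (leading exponent) of `P` w.r.t. the order `r`. -/
def IsExp {N : ℕ} (r : (Fin N →₀ ℕ) → (Fin N →₀ ℕ) → Prop)
    (P : MvPolynomial (Fin N) ℂ) (e : Fin N →₀ ℕ) : Prop :=
  e ∈ P.support ∧ ∀ e' ∈ P.support, e' ≠ e → r e' e

/-- `Exp_≺(J)`: the set of privileged exponents of nonzero elements of `J`. -/
def ExpSet {N : ℕ} (r : (Fin N →₀ ℕ) → (Fin N →₀ ℕ) → Prop)
    (J : Ideal (MvPolynomial (Fin N) ℂ)) : Set (Fin N →₀ ℕ) :=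
  {e | ∃ P ∈ J, P ≠ 0 ∧ IsExp r P e}

/-- `{Q_j}` with exponents `{E_j}` is a standard basis of `J` w.r.t. `r`. -/
def IsStdBasis {N s : ℕ} (r : (Fin N →₀ ℕ) → (Fin N →₀ ℕ) → Prop)
    (J : Ideal (MvPolynomial (Fin N) ℂ))
    (Q : Fin s → MvPolynomial (Fin N) ℂ) (E : Fin s → (Fin N →₀ ℕ)) : Prop :=
  (∀ j, Q j ∈ J ∧ Q j ≠ 0 ∧ IsExp r (Q j) (E j)) ∧
    ExpSet r J = ⋃ j, upSet (E j)

/-- Minimality of a standard basis: the exponents occur in every finite staircase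
generating family. -/
def IsMinimalBasis {N s : ℕ} (r : (Fin N →₀ ℕ) → (Fin N →₀ ℕ) → Prop)
    (J : Ideal (MvPolynomial (Fin N) ℂ)) (E : Fin s → (Fin N →₀ ℕ)) : Prop :=
  ∀ F : Finset (Fin N →₀ ℕ), ExpSet r J = ⋃ e ∈ F, upSet e → ∀ j, E j ∈ F

/-- Reducedness of a standard basis: each `Q_j` is monic and no nonleading monomial of
`Q_j` lies in `Exp_≺(J)`. -/
def IsReducedBasis {N s : ℕ} (r : (Fin N →₀ ℕ) → (Fin N →₀ ℕ) → Prop)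
    (J : Ideal (MvPolynomial (Fin N) ℂ))
    (Q : Fin s → MvPolynomial (Fin N) ℂ) (E : Fin s → (Fin N →₀ ℕ)) : Prop :=
  ∀ j, coeff (E j) (Q j) = 1 ∧ ∀ e ∈ (Q j).support, e ≠ E j → e ∉ ExpSet r J


/-- A nonempty finset has a maximum w.r.t. a trichotomous transitive relation. -/
lemma Finset.exists_rel_max {α : Type*} (r : α → α → Prop) [IsTrichotomous α r]
    [IsTrans α r] (s : Finset α) (hs : s.Nonempty) :
    ∃ m ∈ s, ∀ x ∈ s, x ≠ m → r x m := by
  classical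
  induction hs using Finset.Nonempty.cons_induction with
  | singleton a => exact ⟨a, by simp, fun x hx hne => absurd (by simpa using hx) hne⟩
  | cons a t ha ht IH =>
    obtain ⟨m, hm, hmax⟩ := IH
    rcases trichotomous_of r a m with h | h | h
    · refine ⟨m, Finset.mem_cons_of_mem hm, fun x hx hne => ?_⟩
      rcases Finset.mem_cons.1 hx with rfl | hx
      · exact h
      · exact hmax x hx hne
    · exact absurd h (fun h => ha (h ▸ hm))
    · refine ⟨a, Finset.mem_cons_self a t, fun x hx hne => ?_⟩
      rcases Finset.mem_cons.1 hx with rfl | hx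
      · exact absurd rfl hne
      · by_cases hxm : x = m
        · exact hxm ▸ h
        · exact trans_of r (hmax x hx hxm) h

/-- Any nonzero polynomial has a privileged exponent w.r.t. a strict total order. -/
lemma exists_isExp {N : ℕ} (r : (Fin N →₀ ℕ) → (Fin N →₀ ℕ) → Prop)
    (hstr : IsStrictTotalOrder _ r) {P : MvPolynomial (Fin N) ℂ} (hP : P ≠ 0) :
    ∃ e, IsExp r P e := by
  haveI : IsTrichotomous _ r := by haveI := hstr; infer_instance
  haveI : IsTrans _ r := hstr.toIsTrans
  obtain ⟨m, hm, hmax⟩ := P.support.exists_rel_max r (support_nonempty.2 hP)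
  exact ⟨m, hm, hmax⟩

lemma mem_support_monomial_mul {N : ℕ} {a x : Fin N →₀ ℕ} {c : ℂ} (hc : c ≠ 0)
    {p : MvPolynomial (Fin N) ℂ} :
    x ∈ (monomial a c * p).support ↔ ∃ y ∈ p.support, x = a + y := by
  classical
  rw [mem_support_iff, coeff_monomial_mul']
  constructor
  · intro h
    split_ifs at h with hle
    · refine ⟨x - a, ?_, ?_⟩
      · rw [mem_support_iff]; intro h0; rw [h0, mul_zero] at h; exact h rfl
      · ext i; simp [Nat.add_sub_cancel' (hle i)]
    · exact absurd rfl h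
  · rintro ⟨y, hy, rfl⟩
    have hle : a ≤ a + y := le_add_right le_rfl
    rw [if_pos hle]
    have : a + y - a = y := by ext i; simp
    rw [this]
    exact mul_ne_zero hc (mem_support_iff.1 hy)

/-- If `{Q_j}` is the reduced minimal standard basis of `J` w.r.t. `<₁` and the
privileged exponents of the `Q_j` w.r.t. `<₁` and `<₂` agree, then `{Q_j}` is also the
reduced minimal standard basis of `J` w.r.t. `<₂`. -/
theorem reduced_minimal_basis_order_independence (N s : ℕ)
    (r1 r2 : (Fin N →₀ ℕ) → (Fin N →₀ ℕ) → Prop)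
    (hstr1 : IsStrictTotalOrder _ r1) (hadd1 : ∀ a b c, r1 a b → r1 (a + c) (b + c))
    (hzero1 : ∀ a : Fin N →₀ ℕ, a = 0 ∨ r1 0 a) (hwf1 : WellFounded r1)
    (hstr2 : IsStrictTotalOrder _ r2) (hadd2 : ∀ a b c, r2 a b → r2 (a + c) (b + c))
    (hzero2 : ∀ a : Fin N →₀ ℕ, a = 0 ∨ r2 0 a) (hwf2 : WellFounded r2)
    (J : Ideal (MvPolynomial (Fin N) ℂ))
    (Q : Fin s → MvPolynomial (Fin N) ℂ) (E : Fin s → (Fin N →₀ ℕ))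
    (h1 : IsStdBasis r1 J Q E ∧ IsMinimalBasis r1 J E ∧ IsReducedBasis r1 J Q E)
    (hexp : ∀ j, IsExp r2 (Q j) (E j)) :
    IsStdBasis r2 J Q E ∧ IsMinimalBasis r2 J E ∧ IsReducedBasis r2 J Q E := by
  classical
  obtain ⟨⟨hQ, hE1⟩, hmin1, hred1⟩ := h1
  haveI : IsTrans _ r1 := hstr1.toIsTrans
  haveI : IsTrans _ r2 := hstr2.toIsTrans
  haveI : IsIrrefl _ r2 := by haveI := hstr2; infer_instance
  -- Each E j lies in the union
  have hEmem : ∀ j, E j ∈ ⋃ j, upSet (E j) := fun j =>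
    Set.mem_iUnion.2 ⟨j, 0, by simp⟩
  -- hard direction: ExpSet r2 J ⊆ ⋃ upSet (E j)
  have hsub : ExpSet r2 J ⊆ ⋃ j, upSet (E j) := by
    rintro e ⟨P, hPJ, hP0, hPe⟩
    by_contra heS
    -- well-founded descent on the r1-privileged exponent
    have key : ∀ m (P : MvPolynomial (Fin N) ℂ), P ∈ J → P ≠ 0 → IsExp r2 P e →
        IsExp r1 P m → False := by
      intro m
      refine hwf1.induction
        (C := fun m => ∀ P : MvPolynomial (Fin N) ℂ, P ∈ J → P ≠ 0 → IsExp r2 P e →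
          IsExp r1 P m → False) m ?_
      rintro e1 IH P hPJ hP0 hPe hP1
      have he1S : e1 ∈ ⋃ j, upSet (E j) := by
        rw [← hE1]; exact ⟨P, hPJ, hP0, hP1⟩
      obtain ⟨j, a, rfl⟩ : ∃ j a, e1 = E j + a := by
        obtain ⟨U, ⟨j, rfl⟩, hU⟩ := he1S; exact ⟨j, hU⟩
      set e1 := E j + a with he1def
      have he1ne : e1 ≠ e := fun h => heS (h ▸ he1S)
      have hr2e1 : r2 e1 e := hPe.2 e1 hP1.1 he1ne
      set c := coeff e1 P with hc
      have hc0 : c ≠ 0 := mem_support_iff.1 hP1.1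
      set P' := P - monomial a c * Q j with hP'def
      have hcoeffe1 : coeff e1 (monomial a c * Q j) = c := by
        rw [he1def, add_comm (E j) a, coeff_monomial_mul, (hred1 j).1, mul_one]
      -- membership in support of P'
      have hsupp : ∀ x ∈ P'.support,
          x ≠ e1 ∧ (x ∈ P.support ∨ ∃ y ∈ (Q j).support, y ≠ E j ∧ x = a + y) := by
        intro x hx
        have hxne : coeff x P' ≠ 0 := mem_support_iff.1 hx
        constructor
        · rintro rfl
          rw [hP'def, coeff_sub, hcoeffe1, ← hc, sub_self] at hxne
          exact hxne rfl
        · by_cases hxP : x ∈ P.support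
          · exact Or.inl hxP
          · have hcx : coeff x P = 0 := notMem_support_iff.1 hxP
            have : coeff x (monomial a c * Q j) ≠ 0 := by
              rw [hP'def, coeff_sub, hcx, zero_sub, neg_ne_zero] at hxne
              exact hxne
            obtain ⟨y, hy, rfl⟩ := (mem_support_monomial_mul hc0).1
              (mem_support_iff.2 this)
            refine Or.inr ⟨y, hy, ?_, rfl⟩
            rintro rfl
            rw [add_comm a (E j), ← he1def] at hcx
            exact hc0 (hc.trans hcx)
      -- all exponents of P' are r1-smaller than e1
      have hless1 : ∀ x ∈ P'.support, r1 x e1 := by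
        intro x hx
        obtain ⟨hxne, hcase⟩ := hsupp x hx
        rcases hcase with hxP | ⟨y, hy, hyne, rfl⟩
        · exact hP1.2 x hxP hxne
        · have := hadd1 y (E j) a ((hQ j).2.2.2 y hy hyne)
          rwa [add_comm y a] at this
      -- P' still has privileged r2-exponent e
      have hcoeffe : coeff e (monomial a c * Q j) = 0 := by
        by_contra h
        obtain ⟨y, hy, rfl⟩ := (mem_support_monomial_mul hc0).1 (mem_support_iff.2 h)
        by_cases hyE : y = E j
        · exact he1ne (by rw [hyE, add_comm])
        · have h1 : r2 (a + y) e1 := by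
            have := hadd2 y (E j) a ((hexp j).2 y hy hyE)
            rwa [add_comm y a] at this
          exact irrefl_of r2 e1 (trans_of r2 hr2e1 h1)
      have hePsup : e ∈ P'.support := by
        rw [mem_support_iff, hP'def, coeff_sub, hcoeffe, sub_zero]
        exact mem_support_iff.1 hPe.1
      have hP'e : IsExp r2 P' e := by
        refine ⟨hePsup, fun x hx hxe => ?_⟩
        obtain ⟨hxne, hcase⟩ := hsupp x hx
        rcases hcase with hxP | ⟨y, hy, hyne, rfl⟩
        · exact hPe.2 x hxP hxe
        · have h1 : r2 (a + y) e1 := by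
            have := hadd2 y (E j) a ((hexp j).2 y hy hyne)
            rwa [add_comm y a] at this
          exact trans_of r2 h1 hr2e1
      have hP'0 : P' ≠ 0 := fun h => by
        rw [h] at hePsup; simp at hePsup
      have hP'J : P' ∈ J := J.sub_mem hPJ (J.mul_mem_left _ (hQ j).1)
      obtain ⟨e1', hP'1⟩ := exists_isExp r1 hstr1 hP'0
      exact IH e1' (hless1 e1' hP'1.1) P' hP'J hP'0 hP'e hP'1
    obtain ⟨e1, hPe1⟩ := exists_isExp r1 hstr1 hP0
    exact key e1 P hPJ hP0 hPe hPe1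
  -- easy direction: each E j + a is an r2-exponent of an element of J
  have hsup : (⋃ j, upSet (E j)) ⊆ ExpSet r2 J := by
    rintro e ⟨U, ⟨j, rfl⟩, a, rfl⟩
    refine ⟨monomial a 1 * Q j, J.mul_mem_left _ (hQ j).1, ?_, ?_, ?_⟩
    · intro h
      have : coeff (a + E j) (monomial a 1 * Q j) = 0 := by rw [h]; simp
      rw [coeff_monomial_mul, (hred1 j).1, one_mul] at this
      exact one_ne_zero this
    · rw [mem_support_iff, add_comm (E j) a, coeff_monomial_mul, (hred1 j).1, one_mul]
      exact one_ne_zero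
    · intro x hx hxne
      obtain ⟨y, hy, rfl⟩ := (mem_support_monomial_mul one_ne_zero).1 hx
      have hyne : y ≠ E j := fun h => hxne (by rw [h, add_comm])
      have := hadd2 y (E j) a ((hexp j).2 y hy hyne)
      rwa [add_comm y a] at this
  have hE2 : ExpSet r2 J = ⋃ j, upSet (E j) := Set.Subset.antisymm hsub hsup
  refine ⟨⟨fun j => ⟨(hQ j).1, (hQ j).2.1, hexp j⟩, hE2⟩, ?_, ?_⟩
  · intro F hF j
    exact hmin1 F (by rw [hE1, ← hE2, hF]) j
  · intro j
    refine ⟨(hred1 j).1, fun x hx hxne => ?_⟩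
    rw [hE2, ← hE1]
    exact (hred1 j).2 x hx hxne
end

section
/- Comparison of good filtrations implies Bernstein-Sato type inclusion formally: suppose V and V̄ are two ℤ^p-indexed filtrations of a module M with V_w(M) ⊆ V̄_w(M) ⊆ V_{w+κ}(M) for some κ ∈ ℕ^p and all w ∈ ℤ^p, and suppose for each L in a finite set S of linear forms with nonnegative integer coefficients there is a nonzero polynomial b_L in one variable and an operator θ such that b_L(L(θ) - k)·V^L_k(M) ⊆ V^L_{k-1}(M) for all k ∈ ℤ, where V^L_k(M) = Σ_{L(w)≤k} V_w(M) and V̄_w(M) = ⋂_{L∈S} V^L_{L(w)}(M). Then for any v ∈ ℕ^p and δ ∈ V_0(M), the element b(θ)·δ lies in V_{-v}(M), where b(s) = Π_{L∈S} Π_{-L(v+κ)<k≤0} b_L(L(s)-k). -/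
open Polynomial Finset

/-- `V^L_k(M) = Σ_{L(w) ≤ k} V_w(M)` for `L ∈ ℕ^p`. -/
def VLfilt {p : ℕ} {M : Type*} [AddCommGroup M] [Module ℂ M]
    (V : (Fin p → ℤ) → Submodule ℂ M) (L : Fin p → ℕ) (k : ℤ) : Submodule ℂ M :=
  ⨆ w : {w : Fin p → ℤ // ∑ i, (L i : ℤ) * w i ≤ k}, V w

/-- `L(θ) = Σ l_j θ_j`. -/
def Ltheta {p : ℕ} {M : Type*} [AddCommGroup M] [Module ℂ M]
    (θ : Fin p → Module.End ℂ M) (L : Fin p → ℕ) : Module.End ℂ M :=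
  ∑ i, (L i : ℂ) • θ i

/-- The endomorphism `b_L(L(θ) - k)`. -/
noncomputable def eOp {p : ℕ} {M : Type*} [AddCommGroup M] [Module ℂ M]
    (θ : Fin p → Module.End ℂ M) (b : Polynomial ℂ) (L : Fin p → ℕ) (k : ℤ) :
    Module.End ℂ M :=
  Polynomial.aeval (Ltheta θ L) (b.comp (X - C (k : ℂ)))

/-!
Along a single linear form `L`, the factor `∏_{-L(v+κ) < k ≤ 0} b_L(L(θ) - k)` pushes `V^L_0`
down step by step to `V^L_{-L(v+κ)}`, while every other factor of `b(θ)` is a polynomial in the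
`θ_j` and so preserves that submodule. Hence `b(θ) δ` lies in `V^L_{L(-v-κ)}` for every `L ∈ S`,
i.e. in `V̄_{-v-κ} ⊆ V_{-v}`.
-/

namespace Submodule

variable {R M : Type*} [CommRing R] [AddCommGroup M] [Module R M]

def stabilizerSubalgebra (N : Submodule R M) : Subalgebra R (Module.End R M) where
  carrier := {f | N ∈ f.invtSubmodule}
  mul_mem' hf hg := Module.End.invtSubmodule.comp _ hf hg
  add_mem' hf hg := Module.End.invtSubmodule_inf_invtSubmodule_le_invtSubmodule_add _ _ ⟨hf, hg⟩
  algebraMap_mem' c _ hx := N.smul_mem c hx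

theorem mem_stabilizerSubalgebra {N : Submodule R M} {f : Module.End R M} :
    f ∈ N.stabilizerSubalgebra ↔ N.map f ≤ N :=
  Module.End.mem_invtSubmodule_iff_map_le f

theorem aeval_mem_stabilizerSubalgebra {N : Submodule R M} {f : Module.End R M}
    (hf : f ∈ N.stabilizerSubalgebra) (P : R[X]) : aeval f P ∈ N.stabilizerSubalgebra :=
  Algebra.adjoin_le (Set.singleton_subset_iff.2 hf) (aeval_mem_adjoin_singleton R f)

theorem noncommProd_apply_mem {ι : Type*} {s : Finset ι} {f : ι → Module.End R M} (comm)
    {N : Submodule R M} (hN : ∀ i ∈ s, f i ∈ N.stabilizerSubalgebra) {a : ι} (ha : a ∈ s)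
    {x : M} (hx : f a x ∈ N) : s.noncommProd f comm x ∈ N := by
  classical
  rw [← noncommProd_erase_mul s ha, Module.End.mul_apply]
  refine N.stabilizerSubalgebra.toSubmonoid.noncommProd_mem _ _ _ (fun i hi ↦ ?_) hx
  exact hN i (mem_of_mem_erase hi)

theorem map_aeval_prod_Ioc_le {F : ℤ → Submodule R M} {T : Module.End R M} {q : ℤ → R[X]}
    (hq : ∀ k, (F k).map (aeval T (q k)) ≤ F (k - 1)) {n m : ℤ} (hnm : n ≤ m) :
    (F m).map (aeval T (∏ k ∈ Ioc n m, q k)) ≤ F n := by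
  induction n, hnm using Int.leInductionDown with
  | base => simp [Module.End.one_eq_id]
  | pred n hnm ih =>
    rw [Ioc_sub_one_left_eq_Icc, Icc_eq_cons_Ioc hnm, prod_cons, map_mul,
      Module.End.mul_eq_comp, map_comp]
    exact (map_mono ih).trans (hq n)

end Submodule

open Submodule

section VLfilt

variable {p : ℕ} {M : Type*} [AddCommGroup M] [Module ℂ M]

theorem le_VLfilt (V : (Fin p → ℤ) → Submodule ℂ M) {L : Fin p → ℕ} {w : Fin p → ℤ} {k : ℤ}
    (hw : ∑ i, (L i : ℤ) * w i ≤ k) : V w ≤ VLfilt V L k :=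
  le_iSup_of_le (ι := {w : Fin p → ℤ // ∑ i, (L i : ℤ) * w i ≤ k}) ⟨w, hw⟩ le_rfl

theorem Ltheta_mem_stabilizerSubalgebra {θ : Fin p → Module.End ℂ M} {N : Submodule ℂ M}
    (hθ : ∀ i, θ i ∈ N.stabilizerSubalgebra) (L : Fin p → ℕ) :
    Ltheta θ L ∈ N.stabilizerSubalgebra :=
  Subalgebra.sum_mem _ fun i _ ↦ Subalgebra.smul_mem _ (hθ i) _

end VLfilt

theorem bernstein_sato_inclusion_general (p : ℕ) (M : Type*) [AddCommGroup M] [Module ℂ M]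
    (S : Finset (Fin p → ℕ))
    (V Vbar : (Fin p → ℤ) → Submodule ℂ M)
    (κ v : Fin p → ℕ)
    (θ : Fin p → Module.End ℂ M)
    (b : (Fin p → ℕ) → Polynomial ℂ)
    (hVV : ∀ w, V w ≤ Vbar w ∧ Vbar w ≤ V (fun i => w i + (κ i : ℤ)))
    (hVbar : ∀ w, Vbar w = ⨅ L ∈ S, VLfilt V L (∑ i, (L i : ℤ) * w i))
    (hpres : ∀ L ∈ S, ∀ k : ℤ, ∀ i, (VLfilt V L k).map (θ i) ≤ VLfilt V L k)
    (hdesc : ∀ L ∈ S, ∀ k : ℤ, (VLfilt V L k).map (eOp θ (b L) L k) ≤ VLfilt V L (k - 1))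
    (hcomm : ∀ L ∈ S, ∀ L' ∈ S, ∀ P Q : Polynomial ℂ,
      Commute (Polynomial.aeval (Ltheta θ L) P) (Polynomial.aeval (Ltheta θ L') Q))
    (δ : M) (hδ : δ ∈ V 0) :
    (S.noncommProd
        (fun L => Polynomial.aeval (Ltheta θ L)
          (∏ k ∈ Finset.Ioc (-(∑ i, (L i : ℤ) * ((v i : ℤ) + (κ i : ℤ)))) 0,
            (b L).comp (X - C (k : ℂ))))
        (fun L hL L' hL' _ => hcomm L hL L' hL' _ _)) δ
      ∈ V (fun i => -(v i : ℤ)) := by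
  set w : Fin p → ℤ := fun i => -((v i : ℤ) + κ i)
  have hLw (L : Fin p → ℕ) : ∑ i, (L i : ℤ) * w i = -∑ i, (L i : ℤ) * ((v i : ℤ) + κ i) := by
    simp only [w, mul_neg, sum_neg_distrib]
  suffices hmem : _ ∈ Vbar w by simpa [w] using (hVV w).2 hmem
  simp only [hVbar, mem_iInf, hLw]
  intro L hL
  have hstab (k : ℤ) (L' : Fin p → ℕ) (P : ℂ[X]) :
      aeval (Ltheta θ L') P ∈ (VLfilt V L k).stabilizerSubalgebra :=
    aeval_mem_stabilizerSubalgebra (Ltheta_mem_stabilizerSubalgebra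
      (fun i ↦ mem_stabilizerSubalgebra.2 (hpres L hL k i)) L') P
  refine noncommProd_apply_mem _ (fun L' _ ↦ hstab _ L' _) hL ?_
  have hδL : δ ∈ VLfilt V L 0 := le_VLfilt V (by simp) hδ
  refine map_aeval_prod_Ioc_le (hdesc L hL) ?_ (mem_map_of_mem hδL)
  exact neg_nonpos.2 (sum_nonneg fun i _ ↦ by positivity)

/-- Comparison of filtrations implies a Bernstein–Sato type inclusion: if
`V_w ⊆ V̄_w ⊆ V_{w+κ}`, `V̄_w = ⋂_{L∈S} V^L_{L(w)}`, and for each `L ∈ S` the nonzero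
polynomial `b_L` satisfies `b_L(L(θ)-k)·V^L_k ⊆ V^L_{k-1}`, then for `δ ∈ V_0` the
element `b(θ)·δ = (Π_{L∈S} Π_{-L(v+κ)<k≤0} b_L(L(θ)-k))·δ` lies in `V_{-v}`. -/
theorem bernstein_sato_inclusion (p : ℕ) (M : Type*) [AddCommGroup M] [Module ℂ M]
    (S : Finset (Fin p → ℕ))
    (V Vbar : (Fin p → ℤ) → Submodule ℂ M)
    (κ v : Fin p → ℕ)
    (θ : Fin p → Module.End ℂ M)
    (hθcomm : ∀ i j, Commute (θ i) (θ j))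
    (b : (Fin p → ℕ) → Polynomial ℂ)
    (hbne : ∀ L ∈ S, b L ≠ 0)
    (hVV : ∀ w, V w ≤ Vbar w ∧ Vbar w ≤ V (fun i => w i + (κ i : ℤ)))
    (hVbar : ∀ w, Vbar w = ⨅ L ∈ S, VLfilt V L (∑ i, (L i : ℤ) * w i))
    (hpres : ∀ L ∈ S, ∀ k : ℤ, ∀ i, (VLfilt V L k).map (θ i) ≤ VLfilt V L k)
    (hdesc : ∀ L ∈ S, ∀ k : ℤ, (VLfilt V L k).map (eOp θ (b L) L k) ≤ VLfilt V L (k - 1))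
    (hcomm : ∀ L ∈ S, ∀ L' ∈ S, ∀ P Q : Polynomial ℂ,
      Commute (Polynomial.aeval (Ltheta θ L) P) (Polynomial.aeval (Ltheta θ L') Q))
    (δ : M) (hδ : δ ∈ V 0) :
    (S.noncommProd
        (fun L => Polynomial.aeval (Ltheta θ L)
          (∏ k ∈ Finset.Ioc (-(∑ i, (L i : ℤ) * ((v i : ℤ) + (κ i : ℤ)))) 0,
            (b L).comp (X - C (k : ℂ))))
        (fun L hL L' hL' _ => hcomm L hL L' hL' _ _)) δ
      ∈ V (fun i => -(v i : ℤ)) :=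
  bernstein_sato_inclusion_general p M S V Vbar κ v θ b hVV hVbar hpres hdesc hcomm δ hδ
end
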